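/- arXiv:1109.0794 — 2 statements merged into one kernel-verified Lean document; each statement's English description precedes it below -/
import Mathlib

section
/- Let Φ' be a rank-2 (crystallographic, reduced) root system in a real inner product space, and let Φ ⊆ Φ' be a root subsystem such that every long root of Φ' belongs to Φ. If α₁, α₂ ∈ Φ and α₁ + α₂ ∈ Φ', then α₁ + α₂ ∈ Φ. In other words, a subsystem containing all long roots of a rank-2 root system is closed. -/
/-- A (crystallographic, reduced) root system in a real inner product space. -/
structure IsCrystRootSystem {V : Type*} [NormedAddCommGroup V] [InnerProductSpace ℝ V]
    (Φ : Set V) : Prop where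
  finite : Φ.Finite
  ne_zero : ∀ α ∈ Φ, α ≠ 0
  neg_mem : ∀ α ∈ Φ, -α ∈ Φ
  reflection_mem : ∀ α ∈ Φ, ∀ β ∈ Φ,
    β - (2 * (inner ℝ β α : ℝ) / (inner ℝ α α : ℝ)) • α ∈ Φ
  crystallographic : ∀ α ∈ Φ, ∀ β ∈ Φ,
    ∃ n : ℤ, 2 * (inner ℝ β α : ℝ) = (n : ℝ) * (inner ℝ α α : ℝ)
  reduced : ∀ α ∈ Φ, ∀ t : ℝ, t • α ∈ Φ → t = 1 ∨ t = -1

/-- Two roots lie in the same irreducible component iff they are connected by a chain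
of pairwise non-orthogonal roots. -/
def RootConnected {V : Type*} [NormedAddCommGroup V] [InnerProductSpace ℝ V]
    (Φ : Set V) (α β : V) : Prop :=
  Relation.ReflTransGen (fun a b => a ∈ Φ ∧ b ∈ Φ ∧ (inner ℝ a b : ℝ) ≠ 0) α β

/-- A root is long if its length is maximal among the roots of the irreducible
component containing it. -/
def IsLongRoot {V : Type*} [NormedAddCommGroup V] [InnerProductSpace ℝ V]
    (Φ : Set V) (α : V) : Prop :=
  α ∈ Φ ∧ ∀ β ∈ Φ, RootConnected Φ α β → (inner ℝ β β : ℝ) ≤ (inner ℝ α α : ℝ)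

/-!
If `⟪α₁, α₂⟫ < 0`, the reflection of one root in the other is `α₁ + α₂` as soon as one of the
two Cartan integers is `-1`; if both were `≤ -2`, then `‖α₁ + α₂‖² ≤ 0`. So the sum lies in `Φ`.

If `⟪α₁, α₂⟫ ≥ 0`, then `α₁ + α₂` is a long root of `Φ'`, hence lies in `Φ`. Indeed, the
Cartan integer of `α₁` along `α₁ + α₂` must be `1`, which forces `‖α₁‖ = ‖α₂‖`, and then
`α₁, α₂` are orthogonal or at angle `π/3`. Since `Φ'` has rank two, every root is
`x α₁ + y α₂`, and integrality of its pairings with `α₁` and `α₂` bounds its squared length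
by `‖α₁ + α₂‖²`, which is `2‖α₁‖²` resp. `3‖α₁‖²`.
-/

open scoped RealInnerProductSpace

theorem sq_add_sq_le_two {x y : ℝ} {m k : ℤ} (hx : x ≠ 0) (hy : y ≠ 0)
    (hm : 2 * x = m * (x ^ 2 + y ^ 2)) (hk : 2 * y = k * (x ^ 2 + y ^ 2)) :
    x ^ 2 + y ^ 2 ≤ 2 := by
  have hQ : 0 < x ^ 2 + y ^ 2 := by positivity
  have hm0 : m ≠ 0 := by rintro rfl; simp [hx] at hm
  have hk0 : k ≠ 0 := by rintro rfl; simp [hy] at hk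
  have hmk : (2 : ℝ) ≤ m ^ 2 + k ^ 2 := by
    have : 0 < m ^ 2 := by positivity
    have : 0 < k ^ 2 := by positivity
    exact_mod_cast (by omega : (2 : ℤ) ≤ m ^ 2 + k ^ 2)
  have : (x ^ 2 + y ^ 2) * (m ^ 2 + k ^ 2) = 4 := by
    apply mul_left_cancel₀ hQ.ne'
    linear_combination (-(2 * x) - m * (x ^ 2 + y ^ 2)) * hm
      + (-(2 * y) - k * (x ^ 2 + y ^ 2)) * hk
  nlinarith

theorem sq_add_mul_add_sq_le_three {x y : ℝ} {m k : ℤ} (hQ : 0 < x ^ 2 + x * y + y ^ 2)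
    (hm : 2 * x + y = m * (x ^ 2 + x * y + y ^ 2))
    (hk : x + 2 * y = k * (x ^ 2 + x * y + y ^ 2)) :
    x ^ 2 + x * y + y ^ 2 ≤ 3 := by
  have : (x ^ 2 + x * y + y ^ 2) * (m ^ 2 - m * k + k ^ 2) = 3 := by
    apply mul_left_cancel₀ hQ.ne'
    -- `(2x + y)² - (2x + y)(x + 2y) + (x + 2y)² = 3 (x² + xy + y²)`
    linear_combination (-(2 * x + y) - m * (x ^ 2 + x * y + y ^ 2) + (x + 2 * y)) * hm
      + (-(x + 2 * y) - k * (x ^ 2 + x * y + y ^ 2) + m * (x ^ 2 + x * y + y ^ 2)) * hk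
  have hpos : (0 : ℝ) < m ^ 2 - m * k + k ^ 2 := by nlinarith
  have hpos' : 0 < m ^ 2 - m * k + k ^ 2 := by exact_mod_cast hpos
  have : (1 : ℝ) ≤ m ^ 2 - m * k + k ^ 2 := by exact_mod_cast hpos'
  nlinarith

theorem mem_span_pair_of_finrank_span_le_two {K M : Type*} [DivisionRing K] [AddCommGroup M]
    [Module K M] {s : Set M} (hs : s.Finite)
    (hrank : Module.finrank K (Submodule.span K s) ≤ 2) {α β γ : M} (hα : α ∈ s) (hβ : β ∈ s)
    (hind : LinearIndependent K ![α, β]) (hγ : γ ∈ s) : γ ∈ Submodule.span K {α, β} := by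
  have : FiniteDimensional K (Submodule.span K s) := FiniteDimensional.span_of_finite K hs
  have hle : Submodule.span K {α, β} ≤ Submodule.span K s :=
    Submodule.span_mono (Set.insert_subset hα (Set.singleton_subset_iff.mpr hβ))
  have hpair : Module.finrank K (Submodule.span K {α, β}) = 2 := by
    have := finrank_span_eq_card hind
    rwa [Matrix.range_cons_cons_empty, Fintype.card_fin] at this
  rw [Submodule.eq_of_le_of_finrank_le hle (by omega)]
  exact Submodule.subset_span hγ

theorem real_inner_smul_add_smul_self {V : Type*} [NormedAddCommGroup V] [InnerProductSpace ℝ V]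
    (x y : ℝ) (α β : V) :
    ⟪x • α + y • β, x • α + y • β⟫ = x ^ 2 * ⟪α, α⟫ + 2 * x * y * ⟪α, β⟫ + y ^ 2 * ⟪β, β⟫ := by
  simp only [inner_add_left, inner_add_right, real_inner_smul_left, real_inner_smul_right,
    real_inner_comm α β]
  ring

namespace IsCrystRootSystem

variable {V : Type*} [NormedAddCommGroup V] [InnerProductSpace ℝ V] {Φ : Set V}
  {α β : V}

theorem inner_self_pos (hΦ : IsCrystRootSystem Φ) (hα : α ∈ Φ) : 0 < ⟪α, α⟫ :=
  real_inner_self_pos.mpr (hΦ.ne_zero α hα)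

theorem add_mem_of_two_inner_eq_neg (hΦ : IsCrystRootSystem Φ) (hα : α ∈ Φ) (hβ : β ∈ Φ)
    (h : 2 * ⟪α, β⟫ = -⟪α, α⟫) : β + α ∈ Φ := by
  have hcoeff : 2 * ⟪β, α⟫ / ⟪α, α⟫ = -1 := by
    rw [real_inner_comm, h, neg_div, div_self (hΦ.inner_self_pos hα).ne']
  have := hΦ.reflection_mem α hα β hβ
  rwa [hcoeff, neg_one_smul, sub_neg_eq_add] at this

theorem add_mem_or_inner_le_neg (hΦ : IsCrystRootSystem Φ) (hα : α ∈ Φ) (hβ : β ∈ Φ)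
    (hneg : ⟪α, β⟫ < 0) : β + α ∈ Φ ∨ ⟪α, β⟫ ≤ -⟪α, α⟫ := by
  obtain ⟨n, hn⟩ := hΦ.crystallographic α hα β hβ
  rw [real_inner_comm] at hn
  have ha := hΦ.inner_self_pos hα
  have hn0 : n < 0 := by
    have : (n : ℝ) < 0 := by nlinarith
    exact_mod_cast this
  rcases (by omega : n = -1 ∨ n ≤ -2) with rfl | hn2
  · left
    exact hΦ.add_mem_of_two_inner_eq_neg hα hβ (by simpa using hn)
  · right
    have : (n : ℝ) ≤ -2 := by exact_mod_cast hn2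
    nlinarith

theorem add_mem_of_inner_neg (hΦ : IsCrystRootSystem Φ) (hα : α ∈ Φ) (hβ : β ∈ Φ)
    (hneg : ⟪α, β⟫ < 0) (hne : α + β ≠ 0) : α + β ∈ Φ := by
  rcases hΦ.add_mem_or_inner_le_neg hβ hα (by rwa [real_inner_comm]) with h | hβα
  · exact h
  rcases hΦ.add_mem_or_inner_le_neg hα hβ hneg with h | hαβ
  · rwa [add_comm]
  have : ⟪α + β, α + β⟫ ≤ 0 := by
    rw [real_inner_add_add_self, real_inner_comm β α] at *
    linarith
  exact absurd (real_inner_self_nonpos.mp this) hne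

theorem linearIndependent_of_add_mem (hΦ : IsCrystRootSystem Φ) (hα : α ∈ Φ) (hβ : β ∈ Φ)
    (hαβ : α + β ∈ Φ) : LinearIndependent ℝ ![α, β] := by
  refine (LinearIndependent.pair_iff' (hΦ.ne_zero α hα)).mpr fun t ht => ?_
  subst ht
  rcases hΦ.reduced α hα t hβ with rfl | rfl
  · rw [one_smul, ← two_smul ℝ] at hαβ
    rcases hΦ.reduced α hα 2 hαβ with h | h <;> norm_num at h
  · exact hΦ.ne_zero _ hαβ (by simp)

theorem inner_self_eq_of_add_mem (hΦ : IsCrystRootSystem Φ) (hα : α ∈ Φ) (hβ : β ∈ Φ)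
    (hαβ : α + β ∈ Φ) (hnonneg : 0 ≤ ⟪α, β⟫) : ⟪α, α⟫ = ⟪β, β⟫ := by
  obtain ⟨m, hm⟩ := hΦ.crystallographic _ hαβ α hα
  rw [inner_add_right, real_inner_add_add_self] at hm
  have ha := hΦ.inner_self_pos hα
  have hb := hΦ.inner_self_pos hβ
  have hm0 : 0 < m := by
    have : (0 : ℝ) < m := by nlinarith
    exact_mod_cast this
  have hm2 : m < 2 := by
    have : (m : ℝ) < 2 := by nlinarith
    exact_mod_cast this
  obtain rfl : m = 1 := by omega
  push_cast at hm
  linarith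

theorem inner_eq_zero_or_two_inner_eq (hΦ : IsCrystRootSystem Φ) (hα : α ∈ Φ) (hβ : β ∈ Φ)
    (hne : α ≠ β) (hab : ⟪α, α⟫ = ⟪β, β⟫) (hnonneg : 0 ≤ ⟪α, β⟫) :
    ⟪α, β⟫ = 0 ∨ 2 * ⟪α, β⟫ = ⟪α, α⟫ := by
  obtain ⟨n, hn⟩ := hΦ.crystallographic α hα β hβ
  rw [real_inner_comm] at hn
  have ha := hΦ.inner_self_pos hα
  have hlt : ⟪α, β⟫ < ⟪α, α⟫ := by
    have := real_inner_self_pos.mpr (sub_ne_zero.mpr hne)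
    rw [real_inner_sub_sub_self] at this
    linarith
  have hn0 : 0 ≤ n := by
    have : (0 : ℝ) ≤ n := by nlinarith
    exact_mod_cast this
  have hn2 : n < 2 := by
    have : (n : ℝ) < 2 := by nlinarith
    exact_mod_cast this
  rcases (by omega : n = 0 ∨ n = 1) with rfl | rfl
  · exact Or.inl (by simpa using hn)
  · exact Or.inr (by simpa using hn)

theorem inner_self_le_of_inner_eq_zero (hΦ : IsCrystRootSystem Φ) (hα : α ∈ Φ) (hβ : β ∈ Φ)
    (hab : ⟪α, α⟫ = ⟪β, β⟫) (horth : ⟪α, β⟫ = 0) {x y : ℝ} (hγ : x • α + y • β ∈ Φ) :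
    ⟪x • α + y • β, x • α + y • β⟫ ≤ 2 * ⟪α, α⟫ := by
  have ha := hΦ.inner_self_pos hα
  have hnorm : ⟪x • α + y • β, x • α + y • β⟫ = (x ^ 2 + y ^ 2) * ⟪α, α⟫ := by
    rw [real_inner_smul_add_smul_self, horth, ← hab]
    ring
  rw [hnorm]
  by_cases hx : x = 0
  · subst hx
    rw [zero_smul, zero_add] at hγ
    rcases hΦ.reduced β hβ y hγ with rfl | rfl <;> nlinarith
  by_cases hy : y = 0
  · subst hy
    rw [zero_smul, add_zero] at hγ
    rcases hΦ.reduced α hα x hγ with rfl | rfl <;> nlinarith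
  obtain ⟨m, hm⟩ := hΦ.crystallographic _ hγ α hα
  obtain ⟨k, hk⟩ := hΦ.crystallographic _ hγ β hβ
  simp only [hnorm, inner_add_right, real_inner_smul_right, horth, real_inner_comm α β,
    ← hab] at hm hk
  have hQ := sq_add_sq_le_two hx hy (m := m) (k := k)
    (mul_right_cancel₀ ha.ne' (by linear_combination hm))
    (mul_right_cancel₀ ha.ne' (by linear_combination hk))
  nlinarith

theorem inner_self_le_of_two_inner_eq (hΦ : IsCrystRootSystem Φ) (hα : α ∈ Φ) (hβ : β ∈ Φ)
    (hab : ⟪α, α⟫ = ⟪β, β⟫) (hc : 2 * ⟪α, β⟫ = ⟪α, α⟫) {x y : ℝ} (hγ : x • α + y • β ∈ Φ) :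
    ⟪x • α + y • β, x • α + y • β⟫ ≤ 3 * ⟪α, α⟫ := by
  have ha := hΦ.inner_self_pos hα
  have hnorm : ⟪x • α + y • β, x • α + y • β⟫ = (x ^ 2 + x * y + y ^ 2) * ⟪α, α⟫ := by
    rw [real_inner_smul_add_smul_self, ← hab]
    linear_combination x * y * hc
  have hQ : 0 < x ^ 2 + x * y + y ^ 2 := by
    have := hΦ.inner_self_pos hγ
    rw [hnorm] at this
    exact pos_of_mul_pos_left this ha.le
  obtain ⟨m, hm⟩ := hΦ.crystallographic _ hγ α hα
  obtain ⟨k, hk⟩ := hΦ.crystallographic _ hγ β hβ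
  simp only [hnorm, inner_add_right, real_inner_smul_right, real_inner_comm α β] at hm hk
  have h3 := sq_add_mul_add_sq_le_three hQ (m := m) (k := k)
    (mul_right_cancel₀ ha.ne' (by linear_combination hm - y * hc))
    (mul_right_cancel₀ ha.ne' (by linear_combination hk - x * hc + 2 * y * hab))
  nlinarith

theorem isLongRoot_add_of_inner_nonneg (hΦ : IsCrystRootSystem Φ)
    (hrank : Module.finrank ℝ (Submodule.span ℝ Φ) ≤ 2) (hα : α ∈ Φ) (hβ : β ∈ Φ)
    (hαβ : α + β ∈ Φ) (hnonneg : 0 ≤ ⟪α, β⟫) : IsLongRoot Φ (α + β) := by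
  refine ⟨hαβ, fun γ hγ _ => ?_⟩
  have hind := hΦ.linearIndependent_of_add_mem hα hβ hαβ
  obtain ⟨x, y, rfl⟩ := Submodule.mem_span_pair.mp
    (mem_span_pair_of_finrank_span_le_two hΦ.finite hrank hα hβ hind hγ)
  have hab := hΦ.inner_self_eq_of_add_mem hα hβ hαβ hnonneg
  have hne : α ≠ β := by simpa using hind.injective.ne (show (0 : Fin 2) ≠ 1 by decide)
  rw [real_inner_add_add_self α β, ← hab]
  rcases hΦ.inner_eq_zero_or_two_inner_eq hα hβ hne hab hnonneg with horth | hc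
  · linarith [hΦ.inner_self_le_of_inner_eq_zero hα hβ hab horth hγ]
  · linarith [hΦ.inner_self_le_of_two_inner_eq hα hβ hab hc hγ]

end IsCrystRootSystem

/-- A subsystem of a rank-2 root system containing all long roots is closed: if
`α₁, α₂ ∈ Φ` and `α₁ + α₂ ∈ Φ'` then `α₁ + α₂ ∈ Φ`. -/
theorem stmt_8 {V : Type*} [NormedAddCommGroup V] [InnerProductSpace ℝ V]
    (Φ' Φ : Set V) (h' : IsCrystRootSystem Φ') (h : IsCrystRootSystem Φ)
    (hsub : Φ ⊆ Φ') (hlong : ∀ α : V, IsLongRoot Φ' α → α ∈ Φ)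
    (hrank : Module.finrank ℝ (Submodule.span ℝ Φ') ≤ 2)
    {α₁ α₂ : V} (h₁ : α₁ ∈ Φ) (h₂ : α₂ ∈ Φ) (hsum : α₁ + α₂ ∈ Φ') :
    α₁ + α₂ ∈ Φ := by
  rcases lt_or_ge ⟪α₁, α₂⟫ 0 with hneg | hnonneg
  · exact h.add_mem_of_inner_neg h₁ h₂ hneg (h'.ne_zero _ hsum)
  · exact hlong _ (h'.isLongRoot_add_of_inner_nonneg hrank (hsub h₁) (hsub h₂) hsum hnonneg)
end

section
/- Let Γ be a finite group acting by isometries on a real inner product space V, let Φ ⊆ V be a finite Γ-stable set of nonzero vectors all of the same length, and suppose every β ∈ Φ is orthogonal to each element of Γ·β other than β itself. If Φ contains a vector α fixed by Γ and a vector β with |Γ·β| > 1, then the projections i*α and i*β onto V^Γ satisfy ⟨i*α, i*α⟩ > ⟨i*β, i*β⟩; in particular the image i*(Φ) contains vectors of at least two distinct lengths. -/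
/-!
Expanding `‖i*v‖² = |Γ|⁻² ∑_{γ,δ} ⟪γv, δv⟫` and using the invariance `⟪γv, δv⟫ = ⟪δ⁻¹γv, v⟫`
gives `‖i*v‖² = |Γ|⁻¹ ∑_γ ⟪γv, v⟫`, and the polarization `⟪γv, v⟫ = ‖v‖² - ‖γv - v‖² / 2`
turns this into
  `‖i*v‖² = ‖v‖² - (2|Γ|)⁻¹ ∑_γ ‖γv - v‖²`.
So `i*` fixes the fixed vector `α` and strictly shortens every vector `β` that some `γ` moves;
as `α` and `β` have the same length, `‖i*β‖ < ‖β‖ = ‖α‖ = ‖i*α‖`.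
-/

/-- The averaging map (orthogonal projection onto the fixed subspace) for an orthogonal
action of a finite group on a real inner product space. -/
noncomputable def avgIso {Γ V : Type*} [Group Γ] [Fintype Γ] [NormedAddCommGroup V]
    [InnerProductSpace ℝ V] (ρ : Γ →* (V ≃ₗᵢ[ℝ] V)) (v : V) : V :=
  (Fintype.card Γ : ℝ)⁻¹ • ∑ γ : Γ, ρ γ v

open Finset RealInnerProductSpace

section Averaging

variable {Γ V : Type*} [Group Γ] [NormedAddCommGroup V] [InnerProductSpace ℝ V]
  (ρ : Γ →* (V ≃ₗᵢ[ℝ] V))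

theorem inner_map_map_eq_inner_map_self (v : V) (γ δ : Γ) :
    ⟪ρ γ v, ρ δ v⟫ = ⟪ρ (δ⁻¹ * γ) v, v⟫ := by
  conv_lhs => rw [← mul_inv_cancel_left δ γ, map_mul]
  exact (ρ δ).inner_map_map _ _

theorem inner_map_self_eq_sq_sub_norm_sub_sq (v : V) (γ : Γ) :
    ⟪ρ γ v, v⟫ = ‖v‖ ^ 2 - ‖ρ γ v - v‖ ^ 2 / 2 := by
  rw [norm_sub_sq_real, LinearIsometryEquiv.norm_map]
  ring

variable [Fintype Γ]

theorem avgIso_eq_self {v : V} (hv : ∀ γ, ρ γ v = v) : avgIso ρ v = v := by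
  have hcard : (Fintype.card Γ : ℝ) ≠ 0 := by positivity
  simp only [avgIso, hv, sum_const, card_univ, ← Nat.cast_smul_eq_nsmul ℝ, smul_smul,
    inv_mul_cancel₀ hcard, one_smul]

theorem sum_inner_map_map (v : V) (δ : Γ) :
    ∑ γ, ⟪ρ γ v, ρ δ v⟫ = ∑ γ, ⟪ρ γ v, v⟫ := by
  simp_rw [inner_map_map_eq_inner_map_self]
  exact Fintype.sum_equiv (Equiv.mulLeft δ⁻¹) _ _ fun _ => rfl

theorem inner_avgIso_self (v : V) :
    ⟪avgIso ρ v, avgIso ρ v⟫ = (Fintype.card Γ : ℝ)⁻¹ * ∑ γ, ⟪ρ γ v, v⟫ := by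
  have hcard : (Fintype.card Γ : ℝ) ≠ 0 := by positivity
  rw [avgIso, real_inner_smul_left, real_inner_smul_right, inner_sum]
  simp_rw [sum_inner, sum_inner_map_map, sum_const, card_univ, nsmul_eq_mul]
  field_simp

theorem norm_avgIso_sq (v : V) :
    ‖avgIso ρ v‖ ^ 2 = ‖v‖ ^ 2 - (2 * Fintype.card Γ : ℝ)⁻¹ * ∑ γ, ‖ρ γ v - v‖ ^ 2 := by
  have hcard : (Fintype.card Γ : ℝ) ≠ 0 := by positivity
  rw [← real_inner_self_eq_norm_sq, inner_avgIso_self]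
  simp_rw [inner_map_self_eq_sq_sub_norm_sub_sq, sum_sub_distrib, sum_const, card_univ,
    nsmul_eq_mul, ← sum_div]
  field_simp

theorem norm_avgIso_lt {v : V} (hv : ∃ γ, ρ γ v ≠ v) : ‖avgIso ρ v‖ < ‖v‖ := by
  obtain ⟨γ, hγ⟩ := hv
  have hpos : 0 < ∑ γ, ‖ρ γ v - v‖ ^ 2 :=
    sum_pos' (fun _ _ => by positivity) ⟨γ, mem_univ γ, pow_pos (norm_pos_iff.2 (sub_ne_zero.2 hγ)) 2⟩
  have hsq : ‖avgIso ρ v‖ ^ 2 < ‖v‖ ^ 2 := by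
    rw [norm_avgIso_sq]
    have : (0 : ℝ) < (2 * Fintype.card Γ : ℝ)⁻¹ := by positivity
    nlinarith
  exact lt_of_pow_lt_pow_left₀ 2 (norm_nonneg v) hsq

end Averaging

theorem stmt_15_general {Γ V : Type*} [Group Γ] [Fintype Γ] [NormedAddCommGroup V]
    [InnerProductSpace ℝ V] (ρ : Γ →* (V ≃ₗᵢ[ℝ] V)) (Φ : Finset V)
    (hlen : ∀ v ∈ Φ, ∀ w ∈ Φ, (inner ℝ v v : ℝ) = (inner ℝ w w : ℝ))
    (α : V) (hα : α ∈ Φ) (hαfix : ∀ γ : Γ, ρ γ α = α)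
    (β : V) (hβ : β ∈ Φ) (hβmove : ∃ γ : Γ, ρ γ β ≠ β) :
    (inner ℝ (avgIso ρ β) (avgIso ρ β) : ℝ) < (inner ℝ (avgIso ρ α) (avgIso ρ α) : ℝ) ∧
    (∃ u ∈ (Φ : Set V).image (avgIso ρ), ∃ w ∈ (Φ : Set V).image (avgIso ρ),
      ‖u‖ ≠ ‖w‖) := by
  have hnorm : ‖β‖ = ‖α‖ := by
    have h := hlen β hβ α hα
    rw [real_inner_self_eq_norm_sq, real_inner_self_eq_norm_sq] at h
    exact (pow_left_inj₀ (norm_nonneg β) (norm_nonneg α) two_ne_zero).1 h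
  have hlt : ‖avgIso ρ β‖ < ‖avgIso ρ α‖ := by
    rw [avgIso_eq_self ρ hαfix, ← hnorm]
    exact norm_avgIso_lt ρ hβmove
  refine ⟨?_, avgIso ρ β, ⟨β, hβ, rfl⟩, avgIso ρ α, ⟨α, hα, rfl⟩, hlt.ne⟩
  rw [real_inner_self_eq_norm_sq, real_inner_self_eq_norm_sq]
  exact pow_lt_pow_left₀ hlt (norm_nonneg _) two_ne_zero

/-- Let `Γ` act by isometries on a real inner product space `V`, and let `Φ` be a
finite `Γ`-stable set of nonzero vectors, all of the same length, with every `β ∈ Φ`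
orthogonal to each element of its orbit other than itself. If `Φ` contains a `Γ`-fixed
vector `α` and a vector `β` with nontrivial orbit, then
`⟨i*α, i*α⟩ > ⟨i*β, i*β⟩`; in particular `i*(Φ)` contains vectors of at least two
distinct lengths. -/
theorem stmt_15 {Γ V : Type*} [Group Γ] [Fintype Γ] [NormedAddCommGroup V]
    [InnerProductSpace ℝ V] (ρ : Γ →* (V ≃ₗᵢ[ℝ] V)) (Φ : Finset V)
    (hstable : ∀ (γ : Γ), ∀ v ∈ Φ, ρ γ v ∈ Φ)
    (hne : ∀ v ∈ Φ, v ≠ 0)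
    (hlen : ∀ v ∈ Φ, ∀ w ∈ Φ, (inner ℝ v v : ℝ) = (inner ℝ w w : ℝ))
    (horth : ∀ v ∈ Φ, ∀ γ : Γ, ρ γ v ≠ v → (inner ℝ (ρ γ v) v : ℝ) = 0)
    (α : V) (hα : α ∈ Φ) (hαfix : ∀ γ : Γ, ρ γ α = α)
    (β : V) (hβ : β ∈ Φ) (hβmove : ∃ γ : Γ, ρ γ β ≠ β) :
    (inner ℝ (avgIso ρ β) (avgIso ρ β) : ℝ) < (inner ℝ (avgIso ρ α) (avgIso ρ α) : ℝ) ∧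
    (∃ u ∈ (Φ : Set V).image (avgIso ρ), ∃ w ∈ (Φ : Set V).image (avgIso ρ),
      ‖u‖ ≠ ‖w‖) :=
  stmt_15_general ρ Φ hlen α hα hαfix β hβ hβmove
end
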